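/- For any pair of relatively prime integers (X, Y), there exists a primitive element p of the free group F(x,y) whose exponent sum pair is (X, Y). -/

import Mathlib

abbrev F2 := FreeGroup (Fin 2)

/-- The generator `x` of the free group of rank 2. -/
def xg : F2 := FreeGroup.of 0

/-- The generator `y` of the free group of rank 2. -/
def yg : F2 := FreeGroup.of 1

/-- The exponent sum of the `i`-th generator in a word `w`. -/
def expSum (i : Fin 2) (w : F2) : ℤ :=
  Multiplicative.toAdd
    ((FreeGroup.lift fun j => Multiplicative.ofAdd (if j = i then (1 : ℤ) else 0)) w)

/-- An element is primitive if it is the image of `x` under an automorphism. -/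
def IsPrimitive (w : F2) : Prop := ∃ θ : F2 ≃* F2, θ xg = w

/-- A palindrome: the reduced word reads the same forwards and backwards. -/
def IsPalindrome (w : F2) : Prop := w.toWord.reverse = w.toWord

/-- Only positive exponents appear in the reduced word of `w`. -/
def PosWord (w : F2) : Prop := ∀ l ∈ w.toWord, l.2 = true

/-!
Exponent sums factor through the abelianization, so an endomorphism acts on them linearly,
through the images of `x` and `y`. The Nielsen moves `x ↦ x y ^ k` and `x ↔ y` act on exponent sum
pairs as elementary row operations, and these carry `(1, 0)`, the pair of `x`, to every coprime
pair by the Euclidean algorithm.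
-/

@[simp]
lemma expSum_one (i : Fin 2) : expSum i 1 = 0 := by
  simp [expSum]

@[simp]
lemma expSum_mul (i : Fin 2) (v w : F2) : expSum i (v * w) = expSum i v + expSum i w := by
  simp [expSum]

@[simp]
lemma expSum_inv (i : Fin 2) (w : F2) : expSum i w⁻¹ = -expSum i w := by
  simp [expSum]

@[simp]
lemma expSum_zpow (i : Fin 2) (w : F2) (k : ℤ) : expSum i (w ^ k) = k * expSum i w := by
  simp [expSum]

@[simp]
lemma expSum_of (i j : Fin 2) : expSum i (FreeGroup.of j) = if j = i then 1 else 0 := by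
  simp [expSum]

@[simp]
lemma expSum_xg (i : Fin 2) : expSum i xg = if i = 0 then 1 else 0 := by
  simp [xg, eq_comm]

@[simp]
lemma expSum_yg (i : Fin 2) : expSum i yg = if i = 1 then 1 else 0 := by
  simp [yg, eq_comm]

lemma expSum_map {F : Type*} [FunLike F F2 F2] [MonoidHomClass F F2 F2] (f : F) (i : Fin 2)
    (w : F2) : expSum i (f w) = expSum 0 w * expSum i (f xg) + expSum 1 w * expSum i (f yg) := by
  induction w using FreeGroup.induction_on with
  | C1 => simp
  | of j => fin_cases j <;> simp [xg, yg]
  | inv_of j h => simp only [map_inv, expSum_inv, h]; ring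
  | mul v w hv hw => simp only [map_mul, expSum_mul, hv, hw]; ring

lemma IsPrimitive.map {p : F2} (hp : IsPrimitive p) (θ : F2 ≃* F2) : IsPrimitive (θ p) := by
  obtain ⟨φ, rfl⟩ := hp
  exact ⟨φ.trans θ, rfl⟩

def transvection (k : ℤ) : F2 ≃* F2 :=
  MonoidHom.toMulEquiv (FreeGroup.lift ![xg * yg ^ k, yg]) (FreeGroup.lift ![xg * yg ^ (-k), yg])
    (by ext j; fin_cases j <;> simp [xg, yg]) (by ext j; fin_cases j <;> simp [xg, yg])

@[simp]
lemma transvection_xg (k : ℤ) : transvection k xg = xg * yg ^ k := by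
  simp [transvection, xg]

@[simp]
lemma transvection_yg (k : ℤ) : transvection k yg = yg := by
  simp [transvection, yg]

def swapGenerators : F2 ≃* F2 := FreeGroup.freeGroupCongr (Equiv.swap 0 1)

@[simp]
lemma swapGenerators_xg : swapGenerators xg = yg := by
  simp [swapGenerators, xg, yg]

@[simp]
lemma swapGenerators_yg : swapGenerators yg = xg := by
  simp [swapGenerators, xg, yg]

def IsPrimitivePair (a b : ℤ) : Prop :=
  ∃ p : F2, IsPrimitive p ∧ expSum 0 p = a ∧ expSum 1 p = b

lemma isPrimitivePair_one_zero : IsPrimitivePair 1 0 :=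
  ⟨xg, ⟨MulEquiv.refl F2, rfl⟩, by simp, by simp⟩

lemma IsPrimitivePair.swap {a b : ℤ} (h : IsPrimitivePair a b) : IsPrimitivePair b a := by
  obtain ⟨p, hp, rfl, rfl⟩ := h
  refine ⟨swapGenerators p, hp.map _, ?_, ?_⟩ <;> rw [expSum_map] <;> simp

lemma IsPrimitivePair.add_mul_left {a b : ℤ} (h : IsPrimitivePair a b) (k : ℤ) :
    IsPrimitivePair a (b + k * a) := by
  obtain ⟨p, hp, rfl, rfl⟩ := h
  refine ⟨transvection k p, hp.map _, ?_, ?_⟩ <;> rw [expSum_map] <;> simp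
  ring

lemma IsPrimitivePair.add_mul_right {a b : ℤ} (h : IsPrimitivePair a b) (k : ℤ) :
    IsPrimitivePair (a + k * b) b :=
  (h.swap.add_mul_left k).swap

lemma isPrimitivePair_neg_one_zero : IsPrimitivePair (-1) 0 := by
  simpa using (isPrimitivePair_one_zero.add_mul_left (-1)).swap.add_mul_left 1

lemma Int.natAbs_emod_lt (a : ℤ) {b : ℤ} (hb : b ≠ 0) : (a % b).natAbs < b.natAbs := by
  have := Int.emod_lt a hb
  have := Int.emod_nonneg a hb
  omega

lemma isPrimitivePair_of_gcd_eq_one {a b : ℤ} (h : Int.gcd a b = 1) : IsPrimitivePair a b := by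
  induction hn : b.natAbs using Nat.strong_induction_on generalizing a b with
  | _ n ih =>
  rcases eq_or_ne b 0 with rfl | hb
  · obtain rfl | rfl := Int.natAbs_eq_iff.mp (show a.natAbs = 1 by simpa using h)
    exacts [isPrimitivePair_one_zero, isPrimitivePair_neg_one_zero]
  · have hrec : IsPrimitivePair b (a % b) :=
      ih _ (hn ▸ Int.natAbs_emod_lt a hb) (by rwa [Int.gcd_comm, Int.gcd_emod]) rfl
    simpa only [Int.emod_add_ediv_mul] using hrec.swap.add_mul_right (a / b)

theorem exists_primitive_of_coprime (X Y : ℤ) (h : Int.gcd X Y = 1) :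
    ∃ p : F2, IsPrimitive p ∧ expSum 0 p = X ∧ expSum 1 p = Y :=
  isPrimitivePair_of_gcd_eq_one h
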